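/- arXiv:1907.07411 — 2 statements merged into one kernel-verified Lean document; each statement's English description precedes it below -/
import Mathlib

section
/- Under the standard far-field narrowband model, where the per-antenna, per-subcarrier phase gradient vector with respect to the parameters η = (ψ, d, θ, B) is u(n,k) = (−λ/(2π), −k·r_f, nΔ·sin θ, k·r_f), and the Fisher information matrix is defined entrywise by J_{pq} = γ · Σ_{n=−N/2}^{N/2} Σ_{k=−K/2}^{K/2} |s(k)|² · u_p(n,k) · u_q(n,k), the following closed form holds (assuming |s(−k)| = |s(k)| for all k): J = γ·(λ/(2π))²·E_{K,0}·E_{N,0}·e₁e₁ᵀ + γ·E_{K,2}·E_{N,0}·r_f²·(e₂−e₄)(e₂−e₄)ᵀ + γ·E_{K,0}·E_{N,2}·Δ²·sin²θ·e₃e₃ᵀ, where e_i denotes the i-th standard basis vector of ℝ⁴. -/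
/-!
Each gradient is affine in the subcarrier index and the antenna index,
`u n k = a + k • b + n • c`, so `J` is `γ` times a weighted sum of the outer products
`(a + k • b + n • c)(a + k • b + n • c)ᵀ`. Expanding, every cross term carries one of the first
moments `∑ k |s k|²` and `∑ n`, which are sums of odd functions over ranges that are symmetric
because `K` and `N` are even; only the `a aᵀ`, `b bᵀ` and `c cᵀ` terms survive.
-/

open Finset Matrix

theorem Finset.map_neg_Icc_neg_self {α : Type*} [AddCommGroup α] [LinearOrder α]
    [IsOrderedAddMonoid α] [LocallyFiniteOrder α] (m : α) :
    (Icc (-m) m).map (Equiv.neg α).toEmbedding = Icc (-m) m := by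
  ext x
  simp [neg_le, and_comm]

/-- `-K / 2` rounds towards `-∞`, so for odd `K` the range would not be symmetric. -/
theorem Int.map_neg_Icc_neg_ediv_two {K : ℤ} (hK : Even K) :
    (Icc (-K / 2) (K / 2)).map (Equiv.neg ℤ).toEmbedding = Icc (-K / 2) (K / 2) := by
  rw [Int.neg_ediv_of_dvd hK.two_dvd]
  exact map_neg_Icc_neg_self _

namespace Matrix

variable {ι α β R : Type*} [CommRing R]

theorem sum_smul_vecMulVec_add_smul (s : Finset β) (w x : β → R) (v b : ι → R) :
    ∑ k ∈ s, w k • vecMulVec (v + x k • b) (v + x k • b) =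
      (∑ k ∈ s, w k) • vecMulVec v v + (∑ k ∈ s, x k * w k) • (vecMulVec v b + vecMulVec b v)
        + (∑ k ∈ s, x k ^ 2 * w k) • vecMulVec b b := by
  simp only [add_vecMulVec, vecMulVec_add, smul_vecMulVec, vecMulVec_smul, sum_smul,
    ← sum_add_distrib]
  refine sum_congr rfl fun k _ => ?_
  module

theorem sum_sum_smul_vecMulVec_affine_of_moments_eq_zero (S : Finset α) (T : Finset β)
    (w x : β → R) (y : α → R) (a b c : ι → R)
    (hwx : ∑ k ∈ T, x k * w k = 0) (hy : ∑ n ∈ S, y n = 0) :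
    ∑ n ∈ S, ∑ k ∈ T, w k • vecMulVec (a + x k • b + y n • c) (a + x k • b + y n • c) =
      ((∑ k ∈ T, w k) * #S) • vecMulVec a a + ((∑ k ∈ T, x k ^ 2 * w k) * #S) • vecMulVec b b
        + ((∑ k ∈ T, w k) * ∑ n ∈ S, y n ^ 2) • vecMulVec c c := by
  have inner (n : α) :
      ∑ k ∈ T, w k • vecMulVec (a + x k • b + y n • c) (a + x k • b + y n • c) =
        (∑ k ∈ T, w k) • vecMulVec (a + y n • c) (a + y n • c)
          + (∑ k ∈ T, x k ^ 2 * w k) • vecMulVec b b := by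
    simp only [add_right_comm a (x _ • b), sum_smul_vecMulVec_add_smul, hwx, zero_smul, add_zero]
  have outer := sum_smul_vecMulVec_add_smul S (fun _ => 1) y a c
  simp only [one_smul, mul_one, ← cast_card, hy, zero_smul, add_zero] at outer
  simp only [inner, sum_add_distrib, ← smul_sum, outer, sum_const]
  module

end Matrix

theorem standard_farfield_FIM_general
    (K N : ℕ) (hK : Even K) (hN : Even N)
    (s : ℤ → ℂ) (hs : ∀ k : ℤ, ‖s (-k)‖ = ‖s k‖)
    (Δ lam rf γ θ : ℝ)
    (EK0 EK2 EN0 EN2 : ℝ)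
    (hEK0 : EK0 = ∑ k ∈ Finset.Icc (-(K : ℤ) / 2) ((K : ℤ) / 2),
      (‖s k‖) ^ 2)
    (hEK2 : EK2 = ∑ k ∈ Finset.Icc (-(K : ℤ) / 2) ((K : ℤ) / 2),
      (k : ℝ) ^ 2 * (‖s k‖) ^ 2)
    (hEN0 : EN0 = ∑ n ∈ Finset.Icc (-(N : ℤ) / 2) ((N : ℤ) / 2), ((1 : ℝ)))
    (hEN2 : EN2 = ∑ n ∈ Finset.Icc (-(N : ℤ) / 2) ((N : ℤ) / 2), ((n : ℝ)) ^ 2)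
    -- the phase gradient vector u(n,k) over η = (ψ, d, θ, B)
    (u : ℤ → ℤ → Fin 4 → ℝ)
    (hu : ∀ n k : ℤ, u n k =
      ![-(lam / (2 * Real.pi)), -(k : ℝ) * rf, (n : ℝ) * Δ * Real.sin θ, (k : ℝ) * rf])
    -- the Fisher information matrix, entrywise
    (J : Matrix (Fin 4) (Fin 4) ℝ)
    (hJ : ∀ p q : Fin 4, J p q = γ *
      ∑ n ∈ Finset.Icc (-(N : ℤ) / 2) ((N : ℤ) / 2),
        ∑ k ∈ Finset.Icc (-(K : ℤ) / 2) ((K : ℤ) / 2),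
          (‖s k‖) ^ 2 * u n k p * u n k q)
    -- standard basis vectors of ℝ⁴
    (e : Fin 4 → Fin 4 → ℝ) (he : ∀ i, e i = Pi.single i 1) :
    J = (γ * (lam / (2 * Real.pi)) ^ 2 * EK0 * EN0) • vecMulVec (e 0) (e 0)
      + (γ * EK2 * EN0 * rf ^ 2) • vecMulVec (e 1 - e 3) (e 1 - e 3)
      + (γ * EK0 * EN2 * Δ ^ 2 * (Real.sin θ) ^ 2) • vecMulVec (e 2) (e 2) := by
  set SK := Icc (-(K : ℤ) / 2) ((K : ℤ) / 2)
  set SN := Icc (-(N : ℤ) / 2) ((N : ℤ) / 2)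
  have hJ_sum : J = γ • ∑ n ∈ SN, ∑ k ∈ SK, ‖s k‖ ^ 2 • vecMulVec (u n k) (u n k) := by
    ext p q
    simp only [hJ, Matrix.smul_apply, Matrix.sum_apply, vecMulVec_apply, smul_eq_mul, mul_assoc]
  have hu_affine (n k : ℤ) : u n k = (-(lam / (2 * Real.pi))) • e 0
      + (k : ℝ) • ((-rf) • (e 1 - e 3)) + (n : ℝ) • ((Δ * Real.sin θ) • e 2) := by
    ext i
    fin_cases i <;> simp [hu, he, mul_assoc]
  have hK_moment : ∑ k ∈ SK, (k : ℝ) * ‖s k‖ ^ 2 = 0 :=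
    Function.Odd.finsetSum_eq_zero (fun k => by simp [hs])
      (Int.map_neg_Icc_neg_ediv_two (hK.natCast : Even (K : ℤ)))
  have hN_moment : ∑ n ∈ SN, (n : ℝ) = 0 :=
    Function.Odd.finsetSum_eq_zero (fun n => by simp)
      (Int.map_neg_Icc_neg_ediv_two (hN.natCast : Even (N : ℤ)))
  rw [hJ_sum, hEK0, hEK2, hEN0, hEN2, ← cast_card]
  simp only [hu_affine]
  rw [sum_sum_smul_vecMulVec_affine_of_moments_eq_zero SN SK _ _ _ _ _ _ hK_moment hN_moment]
  simp only [smul_vecMulVec, vecMulVec_smul, smul_smul, smul_add]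
  module

/-- Closed form of the Fisher information matrix in the standard
far-field narrowband model, over the parameters η = (ψ, d, θ, B). -/
theorem standard_farfield_FIM
    (K N : ℕ) (hK : Even K) (hN : Even N)
    (s : ℤ → ℂ) (hs : ∀ k : ℤ, ‖s (-k)‖ = ‖s k‖)
    (Δ lam rf γ θ : ℝ) (hΔ : 0 < Δ) (hlam : 0 < lam) (hγ : 0 < γ)
    (EK0 EK2 EN0 EN2 : ℝ)
    (hEK0 : EK0 = ∑ k ∈ Finset.Icc (-(K : ℤ) / 2) ((K : ℤ) / 2),
      (‖s k‖) ^ 2)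
    (hEK2 : EK2 = ∑ k ∈ Finset.Icc (-(K : ℤ) / 2) ((K : ℤ) / 2),
      (k : ℝ) ^ 2 * (‖s k‖) ^ 2)
    (hEN0 : EN0 = ∑ n ∈ Finset.Icc (-(N : ℤ) / 2) ((N : ℤ) / 2), ((1 : ℝ)))
    (hEN2 : EN2 = ∑ n ∈ Finset.Icc (-(N : ℤ) / 2) ((N : ℤ) / 2), ((n : ℝ)) ^ 2)
    -- the phase gradient vector u(n,k) over η = (ψ, d, θ, B)
    (u : ℤ → ℤ → Fin 4 → ℝ)
    (hu : ∀ n k : ℤ, u n k =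
      ![-(lam / (2 * Real.pi)), -(k : ℝ) * rf, (n : ℝ) * Δ * Real.sin θ, (k : ℝ) * rf])
    -- the Fisher information matrix, entrywise
    (J : Matrix (Fin 4) (Fin 4) ℝ)
    (hJ : ∀ p q : Fin 4, J p q = γ *
      ∑ n ∈ Finset.Icc (-(N : ℤ) / 2) ((N : ℤ) / 2),
        ∑ k ∈ Finset.Icc (-(K : ℤ) / 2) ((K : ℤ) / 2),
          (‖s k‖) ^ 2 * u n k p * u n k q)
    -- standard basis vectors of ℝ⁴
    (e : Fin 4 → Fin 4 → ℝ) (he : ∀ i, e i = Pi.single i 1) :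
    J = (γ * (lam / (2 * Real.pi)) ^ 2 * EK0 * EN0) • vecMulVec (e 0) (e 0)
      + (γ * EK2 * EN0 * rf ^ 2) • vecMulVec (e 1 - e 3) (e 1 - e 3)
      + (γ * EK0 * EN2 * Δ ^ 2 * (Real.sin θ) ^ 2) • vecMulVec (e 2) (e 2) :=
  standard_farfield_FIM_general K N hK hN s hs Δ lam rf γ θ EK0 EK2 EN0 EN2 hEK0 hEK2 hEN0 hEN2 u hu
    J hJ e he
end

section
/- For any real numbers a, b and any x, y with d = √(x² + y²) > 0, the 3×3 matrix M = a·v vᵀ + b·e⊥ e⊥ᵀ with v = (x/d, y/d, −1) and e⊥ = (−y/d, x/d, 0) annihilates the vector v₀ = (x/d, y/d, 1): M·v₀ = 0. Consequently, M is singular, so the position (x,y) and the clock bias B are not jointly identifiable from the standard far-field narrowband Fisher information matrix J(x,B) = a·v vᵀ + b·e⊥ e⊥ᵀ. -/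
open Matrix

/-! `M` is a combination of the rank-one matrices `v vᵀ` and `e⊥ e⊥ᵀ`, and `v₀ = (x/d, y/d, 1)`
is orthogonal to both `v` and `e⊥`: `v ⬝ v₀ = (x² + y²)/d² - 1` vanishes because `(x/d, y/d)` is
a unit vector. A nonzero kernel vector forces `det M = 0`. -/

theorem smul_vecMulVec_add_smul_vecMulVec_mulVec_eq_zero {R n : Type*} [CommSemiring R]
    [Fintype n] (a b : R) {u w z : n → R} (hu : u ⬝ᵥ z = 0) (hw : w ⬝ᵥ z = 0) :
    (a • vecMulVec u u + b • vecMulVec w w) *ᵥ z = 0 := by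
  simp only [add_mulVec, smul_mulVec, vecMulVec_mulVec, hu, hw, MulOpposite.op_zero,
    zero_smul, smul_zero, add_zero]

theorem dotProduct_neg_one_one_eq_zero_of_sq_add_sq {R : Type*} [CommRing R] {p q : R}
    (h : p ^ 2 + q ^ 2 = 1) :
    ![p, q, -1] ⬝ᵥ ![p, q, 1] = 0 := by
  simp only [dotProduct, Fin.sum_univ_three, Matrix.cons_val]
  linear_combination h

theorem dotProduct_rot90_eq_zero {R : Type*} [CommRing R] (p q r : R) :
    ![-q, p, 0] ⬝ᵥ ![p, q, r] = 0 := by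
  simp only [dotProduct, Fin.sum_univ_three, Matrix.cons_val]
  ring

theorem div_sq_add_div_sq_eq_one {K : Type*} [Field K] {x y d : K} (hd : d ^ 2 = x ^ 2 + y ^ 2)
    (hd0 : d ≠ 0) : (x / d) ^ 2 + (y / d) ^ 2 = 1 := by
  rw [div_pow, div_pow, ← add_div, ← hd, div_self (pow_ne_zero 2 hd0)]

theorem FIM_singular_general
    (x y : ℝ)
    (d : ℝ) (hd : d = Real.sqrt (x ^ 2 + y ^ 2)) (hdpos : 0 < d)
    (a b : ℝ)
    (M : Matrix (Fin 3) (Fin 3) ℝ)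
    (hM : M = a • vecMulVec ![x / d, y / d, -1] ![x / d, y / d, -1]
            + b • vecMulVec ![-y / d, x / d, 0] ![-y / d, x / d, 0]) :
    M.mulVec ![x / d, y / d, 1] = 0 ∧ M.det = 0 := by
  have hd2 : d ^ 2 = x ^ 2 + y ^ 2 := by rw [hd, Real.sq_sqrt (by positivity)]
  have hunit := div_sq_add_div_sq_eq_one hd2 hdpos.ne'
  have hnull : M *ᵥ ![x / d, y / d, 1] = 0 := by
    rw [hM, neg_div]
    exact smul_vecMulVec_add_smul_vecMulVec_mulVec_eq_zero a b
      (dotProduct_neg_one_one_eq_zero_of_sq_add_sq hunit) (dotProduct_rot90_eq_zero _ _ _)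
  have hne : ![x / d, y / d, (1 : ℝ)] ≠ 0 := fun h => by simpa using congrFun h 2
  exact ⟨hnull, exists_mulVec_eq_zero_iff.mp ⟨_, hne, hnull⟩⟩

/-- The far-field position–bias FIM annihilates the direction
v₀ = (x/d, y/d, 1), hence it is singular and position and clock bias are not
jointly identifiable. -/
theorem FIM_singular
    (x y : ℝ) (hxy : (x, y) ≠ (0, 0))
    (d : ℝ) (hd : d = Real.sqrt (x ^ 2 + y ^ 2)) (hdpos : 0 < d)
    (a b : ℝ)
    (M : Matrix (Fin 3) (Fin 3) ℝ)
    (hM : M = a • vecMulVec ![x / d, y / d, -1] ![x / d, y / d, -1]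
            + b • vecMulVec ![-y / d, x / d, 0] ![-y / d, x / d, 0]) :
    M.mulVec ![x / d, y / d, 1] = 0 ∧ M.det = 0 :=
  FIM_singular_general x y d hd hdpos a b M hM
end
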